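/- arXiv:2312.04898 — 2 statements merged into one kernel-verified Lean document; each statement's English description precedes it below -/
import Mathlib

section
/- Let H be a symmetric positive definite d×d matrix with smallest eigenvalue at least m > 0, and L a symmetric positive definite matrix with largest eigenvalue σ_1 and smallest eigenvalue σ_d. If ‖H − L²‖ ≤ σ_d²·ε for some ε > 0, then ‖L H⁻¹ L‖ ≤ 1 + (σ_1²/m)·ε. -/
open Matrix MeasureTheory

noncomputable def specNorm {d : ℕ} (A : Matrix (Fin d) (Fin d) ℝ) : ℝ :=
  ‖Matrix.toEuclideanCLM (𝕜 := ℝ) A‖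

theorem isHermTransposeMulSelf {m n : ℕ} (A : Matrix (Fin m) (Fin n) ℝ) :
    (Aᵀ * A).IsHermitian := by
  simpa [Matrix.conjTranspose_eq_transpose_of_trivial] using
    Matrix.isHermitian_conjTranspose_mul_self A

noncomputable def eigList {d : ℕ} (A : Matrix (Fin d) (Fin d) ℝ) (hA : A.IsHermitian) : List ℝ :=
  Multiset.sort (Multiset.map hA.eigenvalues Finset.univ.val) (· ≤ ·)

/-- `ithEig A hA i` : the `i`-th largest eigenvalue of `A` (0-indexed: `i = 0` is the largest,
`i = d - 1` the smallest). -/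
noncomputable def ithEig {d : ℕ} (A : Matrix (Fin d) (Fin d) ℝ) (hA : A.IsHermitian)
    (i : Fin d) : ℝ :=
  (eigList A hA).getD (d - 1 - i) 0

/-- `singVal A i` : the `i`-th largest singular value of `A` (0-indexed). -/
noncomputable def singVal {m n : ℕ} (A : Matrix (Fin m) (Fin n) ℝ) (i : Fin n) : ℝ :=
  Real.sqrt (ithEig (Aᵀ * A) (isHermTransposeMulSelf A) i)

/-- Loewner order: `Loewner A B` iff `A ⪯ B`. -/
def Loewner {d : ℕ} (A B : Matrix (Fin d) (Fin d) ℝ) : Prop := (B - A).PosSemidef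

open scoped Matrix.Norms.L2Operator

section auxHelpers

lemma sorted_getD_zero_le {l : List ℝ} (hs : l.Pairwise (· ≤ ·)) {x : ℝ} (hx : x ∈ l) :
    l.getD 0 0 ≤ x := by
  obtain ⟨k, rfl⟩ := List.mem_iff_get.mp hx
  have h0 : 0 < l.length := k.pos
  rw [List.getD_eq_getElem l 0 h0]
  rcases Nat.eq_or_lt_of_le (Nat.zero_le k.1) with h | h
  · simp [List.get, ← h]
  · simpa using hs.rel_get_of_lt (a := ⟨0, h0⟩) (b := k) h

lemma sorted_le_getD_last {l : List ℝ} (hs : l.Pairwise (· ≤ ·)) {x : ℝ} (hx : x ∈ l) :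
    x ≤ l.getD (l.length - 1) 0 := by
  obtain ⟨k, rfl⟩ := List.mem_iff_get.mp hx
  have h0 : 0 < l.length := k.pos
  have hlast : l.length - 1 < l.length := by omega
  rw [List.getD_eq_getElem l _ hlast]
  rcases Nat.eq_or_lt_of_le (Nat.le_sub_one_of_lt k.2) with h | h
  · have : k = (⟨l.length - 1, hlast⟩ : Fin l.length) := by ext; exact h
    rw [this]; simp
  · simpa using hs.rel_get_of_lt (a := k) (b := ⟨l.length - 1, hlast⟩) h

variable {d : ℕ}

lemma specNorm_eq_l2norm (A : Matrix (Fin d) (Fin d) ℝ) : specNorm A = ‖A‖ := rfl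

lemma eigList_length (A : Matrix (Fin d) (Fin d) ℝ) (hA : A.IsHermitian) :
    (eigList A hA).length = d := by simp [eigList]

lemma eig_mem_eigList (A : Matrix (Fin d) (Fin d) ℝ) (hA : A.IsHermitian) (i : Fin d) :
    hA.eigenvalues i ∈ eigList A hA := by
  rw [eigList, Multiset.mem_sort]
  exact Multiset.mem_map.mpr ⟨i, Finset.mem_univ_val i, rfl⟩

lemma ithEig_min_le (hd : 0 < d) (A : Matrix (Fin d) (Fin d) ℝ) (hA : A.IsHermitian) (i : Fin d) :
    ithEig A hA ⟨d - 1, Nat.sub_lt hd Nat.one_pos⟩ ≤ hA.eigenvalues i := by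
  rw [ithEig]
  simp only [Nat.sub_self]
  exact sorted_getD_zero_le (Multiset.pairwise_sort _ _) (eig_mem_eigList A hA i)

lemma le_ithEig_max (hd : 0 < d) (A : Matrix (Fin d) (Fin d) ℝ) (hA : A.IsHermitian) (i : Fin d) :
    hA.eigenvalues i ≤ ithEig A hA ⟨0, hd⟩ := by
  have := sorted_le_getD_last (Multiset.pairwise_sort
      (Multiset.map hA.eigenvalues Finset.univ.val) (· ≤ ·)) (eig_mem_eigList A hA i)
  rw [ithEig]
  simpa [eigList, eigList_length] using this

lemma ithEig_min_mem (hd : 0 < d) (A : Matrix (Fin d) (Fin d) ℝ) (hA : A.IsHermitian) :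
    ∃ i, hA.eigenvalues i = ithEig A hA ⟨d - 1, Nat.sub_lt hd Nat.one_pos⟩ := by
  have hlen : 0 < (eigList A hA).length := by rw [eigList_length]; exact hd
  rw [ithEig]
  simp only [Nat.sub_self]
  rw [List.getD_eq_getElem _ _ hlen]
  have := List.getElem_mem hlen
  simp only [eigList, Multiset.mem_sort, Multiset.mem_map] at this
  obtain ⟨i, _, h⟩ := this
  exact ⟨i, h⟩

lemma l2_norm_diagonal_le (v : Fin d → ℝ) {c : ℝ} (hc : 0 ≤ c) (h : ∀ i, |v i| ≤ c) :
    ‖(Matrix.diagonal v : Matrix (Fin d) (Fin d) ℝ)‖ ≤ c := by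
  rw [Matrix.l2_opNorm_def]
  apply ContinuousLinearMap.opNorm_le_bound _ hc
  intro x
  rw [LinearEquiv.trans_apply, LinearMap.coe_toContinuousLinearMap']
  have hx : ∀ (y : EuclideanSpace ℝ (Fin d)), ‖y‖ = Real.sqrt (∑ i, (y i)^2) := by
    intro y
    rw [EuclideanSpace.norm_eq]
    congr 1
    exact Finset.sum_congr rfl fun i _ => by rw [Real.norm_eq_abs, sq_abs]
  rw [hx, hx]
  have happ : ∀ i, (Matrix.toEuclideanLin (Matrix.diagonal v) x) i = v i * x i := by
    intro i
    simp [Matrix.toEuclideanLin_apply, Matrix.mulVec_diagonal]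
  calc Real.sqrt (∑ i, ((Matrix.toEuclideanLin (Matrix.diagonal v) x) i)^2)
      = Real.sqrt (∑ i, (v i * x i)^2) := by
        congr 1; exact Finset.sum_congr rfl fun i _ => by rw [happ]
    _ ≤ Real.sqrt (∑ i, c^2 * (x i)^2) := by
        apply Real.sqrt_le_sqrt
        apply Finset.sum_le_sum
        intro i _
        rw [mul_pow]
        apply mul_le_mul_of_nonneg_right _ (sq_nonneg _)
        calc (v i)^2 = |v i|^2 := (sq_abs _).symm
          _ ≤ c^2 := pow_le_pow_left₀ (abs_nonneg _) (h i) 2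
    _ = c * Real.sqrt (∑ i, (x i)^2) := by
        rw [← Finset.mul_sum, Real.sqrt_mul (sq_nonneg c), Real.sqrt_sq hc]

lemma ofReal_comp_eq (f : Fin d → ℝ) : (RCLike.ofReal ∘ f : Fin d → ℝ) = f := by
  funext i; simp

lemma herm_norm_le {A : Matrix (Fin d) (Fin d) ℝ} (hA : A.IsHermitian) {c : ℝ}
    (hc : 0 ≤ c) (h : ∀ i, |hA.eigenvalues i| ≤ c) : ‖A‖ ≤ c := by
  conv_lhs => rw [hA.spectral_theorem, Unitary.conjStarAlgAut_apply]
  rw [CStarRing.norm_mul_mem_unitary _ (Unitary.star_mem (hA.eigenvectorUnitary).2),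
    CStarRing.norm_mem_unitary_mul _ (hA.eigenvectorUnitary).2, ofReal_comp_eq]
  exact l2_norm_diagonal_le _ hc h

lemma posdef_inv_norm_le {A : Matrix (Fin d) (Fin d) ℝ} (hA : A.PosDef) {c : ℝ}
    (hc : 0 < c) (h : ∀ i, c ≤ hA.isHermitian.eigenvalues i) : ‖A⁻¹‖ ≤ c⁻¹ := by
  set U : Matrix (Fin d) (Fin d) ℝ := ↑(hA.isHermitian.eigenvectorUnitary) with hU
  have hUmem : U ∈ unitary (Matrix (Fin d) (Fin d) ℝ) := (hA.isHermitian.eigenvectorUnitary).2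
  set v : Fin d → ℝ := hA.isHermitian.eigenvalues with hv
  have heigpos : ∀ i, 0 < v i := fun i => lt_of_lt_of_le hc (h i)
  have h1 : star U * A * U = Matrix.diagonal v := by
    have := hA.isHermitian.conjStarAlgAut_star_eigenvectorUnitary; rw [Unitary.conjStarAlgAut_star_apply] at this
    rwa [ofReal_comp_eq] at this
  have hsU : star U * U = 1 := Unitary.coe_star_mul_self ⟨U, hUmem⟩
  have hUs : U * star U = 1 := Unitary.coe_mul_star_self ⟨U, hUmem⟩
  have hAU : A * U = U * Matrix.diagonal v := by
    have := congrArg (fun M => U * M) h1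
    simpa [← Matrix.mul_assoc, hUs, Matrix.one_mul] using this
  have hAinv : A⁻¹ = U * Matrix.diagonal (fun i => (v i)⁻¹) * star U := by
    apply Matrix.inv_eq_right_inv
    calc A * (U * Matrix.diagonal (fun i => (v i)⁻¹) * star U)
        = (A * U) * Matrix.diagonal (fun i => (v i)⁻¹) * star U := by
          simp only [Matrix.mul_assoc]
      _ = U * (Matrix.diagonal v * Matrix.diagonal (fun i => (v i)⁻¹)) * star U := by
          rw [hAU]; simp only [Matrix.mul_assoc]
      _ = 1 := by
          rw [Matrix.diagonal_mul_diagonal]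
          have : (fun i => v i * (v i)⁻¹) = fun _ : Fin d => (1:ℝ) := by
            funext i; exact mul_inv_cancel₀ (heigpos i).ne'
          rw [this, Matrix.diagonal_one, Matrix.mul_one, hUs]
  rw [hAinv, CStarRing.norm_mul_mem_unitary _ (Unitary.star_mem hUmem),
    CStarRing.norm_mem_unitary_mul _ hUmem]
  apply l2_norm_diagonal_le _ (by positivity)
  intro i
  rw [abs_of_pos (inv_pos.mpr (heigpos i))]
  exact inv_anti₀ hc (h i)

end auxHelpers

/-- bound on `‖L H⁻¹ L‖` from `‖H − L²‖ ≤ σ_d² ε` and `m ≤ λ_min(H)`. -/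
theorem stmt_4 {d : ℕ} (hd : 0 < d) (H L : Matrix (Fin d) (Fin d) ℝ)
    (hH : H.PosDef) (hL : L.PosDef) (m ε : ℝ) (hm : 0 < m) (hε : 0 < ε)
    (hHm : m ≤ ithEig H hH.isHermitian ⟨d - 1, by omega⟩)
    (hnorm : specNorm (H - L * L) ≤
      (ithEig L hL.isHermitian ⟨d - 1, by omega⟩) ^ 2 * ε) :
    specNorm (L * H⁻¹ * L) ≤
      1 + (ithEig L hL.isHermitian ⟨0, hd⟩) ^ 2 / m * ε := by
  haveI : Nonempty (Fin d) := ⟨⟨0, hd⟩⟩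
  set σd := ithEig L hL.isHermitian ⟨d - 1, by omega⟩ with hσd
  set σ1 := ithEig L hL.isHermitian ⟨0, hd⟩ with hσ1
  have hσd_le : ∀ i, σd ≤ hL.isHermitian.eigenvalues i := ithEig_min_le hd L hL.isHermitian
  have hle_σ1 : ∀ i, hL.isHermitian.eigenvalues i ≤ σ1 := le_ithEig_max hd L hL.isHermitian
  have hσd_pos : 0 < σd := by
    obtain ⟨i, hi⟩ := ithEig_min_mem hd L hL.isHermitian
    rw [← hσd] at hi
    rw [← hi]
    exact hL.eigenvalues_pos i
  have hσdσ1 : σd ≤ σ1 := le_trans (hσd_le ⟨0, hd⟩) (hle_σ1 ⟨0, hd⟩)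
  have hσ1_pos : 0 < σ1 := lt_of_lt_of_le hσd_pos hσdσ1
  -- norm bounds
  have hHinv : ‖H⁻¹‖ ≤ m⁻¹ := by
    apply posdef_inv_norm_le hH hm
    intro i
    exact le_trans hHm (ithEig_min_le hd H hH.isHermitian i)
  have hLinv : ‖L⁻¹‖ ≤ σd⁻¹ := posdef_inv_norm_le hL hσd_pos hσd_le
  have hLnorm : ‖L‖ ≤ σ1 := by
    apply herm_norm_le hL.isHermitian hσ1_pos.le
    intro i
    rw [abs_of_pos (hL.eigenvalues_pos i)]
    exact hle_σ1 i
  -- invertibility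
  have hHdet : IsUnit H.det := isUnit_iff_ne_zero.mpr hH.det_pos.ne'
  have hLdet : IsUnit L.det := isUnit_iff_ne_zero.mpr hL.det_pos.ne'
  have hHH : H⁻¹ * H = 1 := Matrix.nonsing_inv_mul H hHdet
  have hLL : L * L⁻¹ = 1 := Matrix.mul_nonsing_inv L hLdet
  -- key identity
  have key : L * H⁻¹ * L - 1 = L * H⁻¹ * (L * L - H) * L⁻¹ := by
    have h1 : L * H⁻¹ * (L * L - H) * L⁻¹
        = L * H⁻¹ * (L * L) * L⁻¹ - L * H⁻¹ * H * L⁻¹ := by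
      rw [Matrix.mul_sub, Matrix.sub_mul]
    rw [h1]
    congr 1
    · symm
      calc L * H⁻¹ * (L * L) * L⁻¹ = L * H⁻¹ * L * (L * L⁻¹) := by
            simp only [Matrix.mul_assoc]
        _ = L * H⁻¹ * L := by rw [hLL, Matrix.mul_one]
    · symm
      calc L * H⁻¹ * H * L⁻¹ = L * ((H⁻¹ * H) * L⁻¹) := by simp only [Matrix.mul_assoc]
        _ = 1 := by rw [hHH, Matrix.one_mul, hLL]
  -- assemble
  rw [specNorm_eq_l2norm] at hnorm ⊢
  have hnormrev : ‖L * L - H‖ ≤ σd ^ 2 * ε := by rwa [norm_sub_rev] at hnorm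
  have hbound : ‖L * H⁻¹ * L - 1‖ ≤ σ1 * m⁻¹ * (σd ^ 2 * ε) * σd⁻¹ := by
    rw [key]
    calc ‖L * H⁻¹ * (L * L - H) * L⁻¹‖
        ≤ ‖L * H⁻¹ * (L * L - H)‖ * ‖L⁻¹‖ := norm_mul_le _ _
      _ ≤ ‖L * H⁻¹‖ * ‖L * L - H‖ * ‖L⁻¹‖ :=
          mul_le_mul_of_nonneg_right (norm_mul_le _ _) (norm_nonneg _)
      _ ≤ ‖L‖ * ‖H⁻¹‖ * ‖L * L - H‖ * ‖L⁻¹‖ := by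
          apply mul_le_mul_of_nonneg_right _ (norm_nonneg _)
          exact mul_le_mul_of_nonneg_right (norm_mul_le _ _) (norm_nonneg _)
      _ ≤ σ1 * m⁻¹ * (σd ^ 2 * ε) * σd⁻¹ := by
          apply mul_le_mul
          · apply mul_le_mul
            · exact mul_le_mul hLnorm hHinv (norm_nonneg _) hσ1_pos.le
            · exact hnormrev
            · exact norm_nonneg _
            · positivity
          · exact hLinv
          · exact norm_nonneg _
          · positivity
  have h1norm : ‖(1 : Matrix (Fin d) (Fin d) ℝ)‖ = 1 := CStarRing.norm_one
  calc ‖L * H⁻¹ * L‖ = ‖(L * H⁻¹ * L - 1) + 1‖ := by rw [sub_add_cancel]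
    _ ≤ ‖L * H⁻¹ * L - 1‖ + ‖(1 : Matrix (Fin d) (Fin d) ℝ)‖ := norm_add_le _ _
    _ ≤ σ1 * m⁻¹ * (σd ^ 2 * ε) * σd⁻¹ + 1 := by rw [h1norm]; exact add_le_add_left hbound 1
    _ ≤ 1 + σ1 ^ 2 / m * ε := by
        rw [add_comm]
        apply add_le_add_right
        have hexp : σ1 * m⁻¹ * (σd ^ 2 * ε) * σd⁻¹ = σ1 * σd * ε / m := by
          field_simp
        rw [hexp, div_mul_eq_mul_div, div_le_div_iff_of_pos_right hm]
        nlinarith [mul_le_mul_of_nonneg_left hσdσ1 (mul_nonneg hσ1_pos.le hε.le)]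
end

section
/- Let 0 < m ≤ M and L be an invertible 2×2 real matrix. Suppose H₁ = M·I₂ and H₂ = m·I₂. Then ‖L⁻ᵀ H₁ L⁻¹‖ · ‖L H₂⁻¹ Lᵀ‖ ≥ κ(LLᵀ)·(M/m), where κ(LLᵀ) = λ_1(LLᵀ)/λ_2(LLᵀ) is the spectral condition number and ‖·‖ is the spectral norm. -/
open Matrix MeasureTheory

lemma abs_eig_le {d : ℕ} (A : Matrix (Fin d) (Fin d) ℝ) (v : Fin d → ℝ) (hv : v ≠ 0)
    (c : ℝ) (h : A *ᵥ v = c • v) : |c| ≤ specNorm A := by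
  set w : EuclideanSpace ℝ (Fin d) := (WithLp.equiv 2 _).symm v with hwdef
  have hw : toEuclideanCLM (𝕜 := ℝ) A w = c • w := by
    rw [hwdef, WithLp.equiv_symm_apply, toEuclideanCLM_toLp]
    simp [Matrix.toLin'_apply, h]
  have h1 := (toEuclideanCLM (𝕜 := ℝ) A).le_opNorm w
  rw [hw, norm_smul, Real.norm_eq_abs] at h1
  have hwne : ‖w‖ ≠ 0 := by
    rw [norm_ne_zero_iff]
    intro h0
    exact hv (by simpa [hwdef] using congrArg (WithLp.equiv 2 _) h0)
  have hwpos : 0 < ‖w‖ := lt_of_le_of_ne (norm_nonneg _) (Ne.symm hwne)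
  exact le_of_mul_le_mul_right h1 hwpos

lemma ithEig_mem {d : ℕ} (A : Matrix (Fin d) (Fin d) ℝ) (hA : A.IsHermitian) (i : Fin d) :
    ∃ j, hA.eigenvalues j = ithEig A hA i := by
  have hlen : (eigList A hA).length = d := by
    simp [eigList]
  have hidx : d - 1 - (i : ℕ) < (eigList A hA).length := by
    rw [hlen]
    have : d - 1 - (i : ℕ) ≤ d - 1 := Nat.sub_le _ _
    omega
  have hmem : ithEig A hA i ∈ eigList A hA := by
    rw [ithEig, List.getD_eq_getElem _ _ hidx]
    exact List.getElem_mem _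
  have := Multiset.mem_sort (r := (· ≤ ·)) |>.mp hmem
  obtain ⟨j, _, hj⟩ := Multiset.mem_map.mp this
  exact ⟨j, hj⟩

set_option synthInstance.maxHeartbeats 1000000 in
lemma specNorm_smul {d : ℕ} (c : ℝ) (B : Matrix (Fin d) (Fin d) ℝ) :
    specNorm (c • B) = |c| * specNorm B := by
  rw [specNorm, specNorm, _root_.map_smul, norm_smul c (toEuclideanCLM (𝕜 := ℝ) B), Real.norm_eq_abs]

/-- lower bound `κ(LLᵀ)·(M/m)` for the preconditioned condition-number product
evaluated at Hessians `M·I` and `m·I`. -/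
theorem stmt_18 (m M : ℝ) (hm : 0 < m) (hmM : m ≤ M)
    (L : Matrix (Fin 2) (Fin 2) ℝ) (hL : IsUnit L.det)
    (hLLT : (L * Lᵀ).IsHermitian) :
    (ithEig (L * Lᵀ) hLLT 0 / ithEig (L * Lᵀ) hLLT 1) * (M / m) ≤
      specNorm ((L⁻¹)ᵀ * (M • (1 : Matrix (Fin 2) (Fin 2) ℝ)) * L⁻¹) *
        specNorm (L * (m • (1 : Matrix (Fin 2) (Fin 2) ℝ))⁻¹ * Lᵀ) := by
  have hM : 0 < M := lt_of_lt_of_le hm hmM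
  set A := L * Lᵀ with hAdef
  have hU : IsUnit A.det := by
    rw [hAdef, Matrix.det_mul, Matrix.det_transpose]
    exact hL.mul hL
  have hsd : A.PosSemidef := by
    simpa [Matrix.conjTranspose_eq_transpose_of_trivial] using
      Matrix.posSemidef_self_mul_conjTranspose L
  have hpos : ∀ j, 0 < hLLT.eigenvalues j := by
    intro j
    have h0 : 0 ≤ hLLT.eigenvalues j := hsd.eigenvalues_nonneg j
    rcases h0.lt_or_eq with h | h
    · exact h
    · exfalso
      have hdet : A.det = ∏ i, hLLT.eigenvalues i := by
        simpa using hLLT.det_eq_prod_eigenvalues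
      rw [Finset.prod_eq_zero (Finset.mem_univ j) h.symm] at hdet
      exact hU.ne_zero hdet
  -- rewrite the two matrices
  have e1 : (L⁻¹)ᵀ * (M • (1 : Matrix (Fin 2) (Fin 2) ℝ)) * L⁻¹ = M • A⁻¹ := by
    rw [Matrix.transpose_nonsing_inv, hAdef, Matrix.mul_inv_rev]
    simp [Matrix.mul_smul, Matrix.smul_mul]
  have e2 : L * (m • (1 : Matrix (Fin 2) (Fin 2) ℝ))⁻¹ * Lᵀ = m⁻¹ • A := by
    have hminv : (m • (1 : Matrix (Fin 2) (Fin 2) ℝ))⁻¹ = m⁻¹ • 1 := by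
      apply Matrix.inv_eq_right_inv
      rw [Matrix.smul_mul, Matrix.mul_smul, smul_smul, mul_inv_cancel₀ hm.ne', one_smul, mul_one]
    rw [hminv, hAdef]
    simp [Matrix.mul_smul, Matrix.smul_mul]
  rw [e1, e2, specNorm_smul, specNorm_smul, abs_of_pos hM, abs_of_pos (inv_pos.mpr hm)]
  obtain ⟨j1, hj1⟩ := ithEig_mem A hLLT 0
  obtain ⟨j2, hj2⟩ := ithEig_mem A hLLT 1
  have hl1 : 0 < ithEig A hLLT 0 := hj1 ▸ hpos j1
  have hl2 : 0 < ithEig A hLLT 1 := hj2 ▸ hpos j2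
  have hvne : ∀ j : Fin 2, (⇑(hLLT.eigenvectorBasis j) : Fin 2 → ℝ) ≠ 0 := by
    intro j h0
    exact hLLT.eigenvectorBasis.orthonormal.ne_zero j (by ext k; exact congrFun h0 k)
  -- bound for specNorm A
  have hb2 : ithEig A hLLT 0 ≤ specNorm A := by
    have := abs_eig_le A _ (hvne j1) _ (hLLT.mulVec_eigenvectorBasis j1)
    rwa [abs_of_pos (hpos j1), hj1] at this
  -- bound for specNorm A⁻¹
  have hb1 : (ithEig A hLLT 1)⁻¹ ≤ specNorm A⁻¹ := by
    have hv2 : A *ᵥ ⇑(hLLT.eigenvectorBasis j2) =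
        hLLT.eigenvalues j2 • ⇑(hLLT.eigenvectorBasis j2) := hLLT.mulVec_eigenvectorBasis j2
    have hid : A⁻¹ *ᵥ (A *ᵥ ⇑(hLLT.eigenvectorBasis j2)) = ⇑(hLLT.eigenvectorBasis j2) := by
      rw [Matrix.mulVec_mulVec, Matrix.nonsing_inv_mul A hU, Matrix.one_mulVec]
    rw [hv2, Matrix.mulVec_smul] at hid
    have hinv : A⁻¹ *ᵥ ⇑(hLLT.eigenvectorBasis j2) =
        (hLLT.eigenvalues j2)⁻¹ • ⇑(hLLT.eigenvectorBasis j2) := by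
      calc A⁻¹ *ᵥ ⇑(hLLT.eigenvectorBasis j2)
          = (hLLT.eigenvalues j2)⁻¹ •
            (hLLT.eigenvalues j2 • (A⁻¹ *ᵥ ⇑(hLLT.eigenvectorBasis j2))) := by
            rw [smul_smul, inv_mul_cancel₀ (hpos j2).ne', one_smul]
        _ = _ := by rw [hid]
    have := abs_eig_le A⁻¹ _ (hvne j2) _ hinv
    rwa [abs_of_pos (inv_pos.mpr (hpos j2)), hj2] at this
  have hsA : 0 < specNorm A := lt_of_lt_of_le hl1 hb2
  have hsAi : 0 < specNorm A⁻¹ := lt_of_lt_of_le (inv_pos.mpr hl2) hb1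
  calc ithEig A hLLT 0 / ithEig A hLLT 1 * (M / m)
      = M * (ithEig A hLLT 1)⁻¹ * (m⁻¹ * ithEig A hLLT 0) := by
        field_simp
    _ ≤ M * specNorm A⁻¹ * (m⁻¹ * specNorm A) := by
        gcongr
end
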